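/- Let I ⊆ S = k[x_1,…,x_n] be a homogeneous ideal, A = S/I, C a maximal cone in the Gröbner fan GF(I) with associated term order <, and M an (n_C × n)-matrix whose rows r_1,…,r_{n_C} ∈ C project to the primitive ray generators of C modulo the lineality space L_I; let Ĩ_M ⊆ S[t_1,…,t_{n_C}] be the lifted ideal and Ã_M := S[t_1,…,t_{n_C}]/Ĩ_M the lifted algebra. Then: (i) Ã_M is a free k[t_1,…,t_{n_C}]-module with basis the standard monomial basis B_C of A with respect to init_C(I); (ii) for every face τ of C there exists a point a_τ ∈ k^{n_C} such that the specialization of Ã_M at t = a_τ (i.e. the quotient of Ã_M by the ideal generated by t_i − (a_τ)_i, i = 1,…,n_C) is isomorphic to S/init_τ(I); in particular the generic fibers of the family Spec(Ã_M) → A^{n_C} are isomorphic to Spec(A) and there exist special fibers Spec(S/init_τ(I)) for every proper face τ of C. -/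

import Mathlib

/-!
Fix, for each non-standard exponent `m`, the reduced element `g_m = x^m - NF(x^m) ∈ I`. For every
weight `w` in the closed cone `C`, `x^m` is of top `w`-weight in `g_m`, and the initial forms of
the `g_m` generate `init_w(I)`. For the integral rows `r_i` of `M`, all lifts are homogeneous for
a `ℤ^N`-grading of `S[t]`, and `g̃_m = x^m + ∑ t^(…) x^b` with `b` standard. These lifts rewrite
every monomial as a `k[t]`-combination of standard monomials, while a `k[t]`-relation among
standard monomials would give, after taking a homogeneous component and setting `t = 1`, a
nonzero element of `I` supported on standard monomials. Finally, specializing `t_i` to `0` for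
the rays of the face of `w = l + ∑ c_i r_i` and to `1` otherwise sends `Ĩ_M` onto `init_w(I)`.
-/

open MvPolynomial
open scoped Classical

noncomputable section

def wdot {n : ℕ} (w : Fin n → ℝ) (a : Fin n →₀ ℕ) : ℝ := ∑ i, w i * (a i : ℝ)

def initForm {k : Type*} [Field k] {n : ℕ} (w : Fin n → ℝ) (f : MvPolynomial (Fin n) k) :
    MvPolynomial (Fin n) k :=
  ∑ b ∈ f.support.filter (fun b => ∀ a ∈ f.support, wdot w a ≤ wdot w b),
    monomial b (coeff b f)

def initIdeal {k : Type*} [Field k] {n : ℕ} (w : Fin n → ℝ)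
    (I : Ideal (MvPolynomial (Fin n) k)) : Ideal (MvPolynomial (Fin n) k) :=
  Ideal.span {g | ∃ f ∈ I, f ≠ 0 ∧ g = initForm w f}

def gfCone {k : Type*} [Field k] {n : ℕ} (I : Ideal (MvPolynomial (Fin n) k))
    (w : Fin n → ℝ) : Set (Fin n → ℝ) :=
  closure {v | initIdeal v I = initIdeal w I}

def IsTermOrder {σ : Type*} (tle : (σ →₀ ℕ) → (σ →₀ ℕ) → Prop) : Prop :=
  IsLinearOrder (σ →₀ ℕ) tle ∧ (∀ a, tle 0 a) ∧
    (∀ a b c : σ →₀ ℕ, tle a b → tle (a + c) (b + c))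

def leadForm {k : Type*} [Field k] {σ : Type*} (tle : (σ →₀ ℕ) → (σ →₀ ℕ) → Prop)
    (f : MvPolynomial σ k) : MvPolynomial σ k :=
  ∑ b ∈ f.support.filter (fun b => ∀ a ∈ f.support, tle a b),
    monomial b (coeff b f)

def leadIdeal {k : Type*} [Field k] {σ : Type*} (tle : (σ →₀ ℕ) → (σ →₀ ℕ) → Prop)
    (I : Ideal (MvPolynomial σ k)) : Ideal (MvPolynomial σ k) :=
  Ideal.span {g | ∃ f ∈ I, f ≠ 0 ∧ g = leadForm tle f}

def rdotZ {n : ℕ} (r : Fin n → ℤ) (a : Fin n →₀ ℕ) : ℤ := ∑ j, r j * (a j : ℤ)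

def muM {k : Type*} [Field k] {N n : ℕ} (M : Fin N → Fin n → ℤ)
    (f : MvPolynomial (Fin n) k) (i : Fin N) : ℤ :=
  WithBot.unbotD 0 ((f.support.image fun a => rdotZ (M i) a).max)

def liftExp {k : Type*} [Field k] {N n : ℕ} (M : Fin N → Fin n → ℤ)
    (f : MvPolynomial (Fin n) k) (a : Fin n →₀ ℕ) : (Fin n ⊕ Fin N) →₀ ℕ :=
  Finsupp.equivFunOnFinite.symm
    (Sum.elim (fun j => a j) (fun i => (muM M f i - rdotZ (M i) a).toNat))

def liftPoly {k : Type*} [Field k] {N n : ℕ} (M : Fin N → Fin n → ℤ)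
    (f : MvPolynomial (Fin n) k) : MvPolynomial (Fin n ⊕ Fin N) k :=
  ∑ a ∈ f.support, monomial (liftExp M f a) (coeff a f)

def liftIdeal {k : Type*} [Field k] {N n : ℕ} (M : Fin N → Fin n → ℤ)
    (I : Ideal (MvPolynomial (Fin n) k)) : Ideal (MvPolynomial (Fin n ⊕ Fin N) k) :=
  Ideal.span {g | ∃ f ∈ I, g = liftPoly M f}


theorem Finset.exists_rel_max {α : Type*} {r : α → α → Prop} [Std.Total r] [IsTrans α r]
    {s : Finset α} (hs : s.Nonempty) : ∃ b ∈ s, ∀ a ∈ s, r a b := by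
  induction hs using Finset.Nonempty.cons_induction with
  | singleton x => exact ⟨x, by simp, by simpa using (total_of r x x).elim id id⟩
  | cons x s hx hs ih =>
    obtain ⟨b, hb, hmax⟩ := ih
    rcases total_of r x b with hxb | hbx
    · exact ⟨b, Finset.mem_cons_of_mem hb, by simpa [hxb] using hmax⟩
    · refine ⟨x, Finset.mem_cons_self x s, ?_⟩
      simpa [(total_of r x x).elim id id] using fun a ha => trans_of r (hmax a ha) hbx

namespace IsTermOrder

variable {σ : Type*} {tle : (σ →₀ ℕ) → (σ →₀ ℕ) → Prop}

theorem rel_of_le (h : IsTermOrder tle) {a b : σ →₀ ℕ} (hab : a ≤ b) : tle a b := by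
  simpa [tsub_add_cancel_of_le hab] using h.2.2 0 (b - a) a (h.2.1 (b - a))

theorem exists_max (h : IsTermOrder tle) {s : Finset (σ →₀ ℕ)} (hs : s.Nonempty) :
    ∃ b ∈ s, ∀ a ∈ s, tle a b :=
  have := h.1
  Finset.exists_rel_max hs

/-- Dickson's lemma makes every term order a well-order. -/
theorem wellFounded [Finite σ] (h : IsTermOrder tle) :
    WellFounded fun a b : σ →₀ ℕ => tle a b ∧ ¬ tle b a := by
  have := h.1
  refine WellQuasiOrdered.wellFounded fun f => ?_
  obtain ⟨m, m', hmm', hle⟩ := wellQuasiOrdered_le f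
  exact ⟨m, m', hmm', h.rel_of_le hle⟩

end IsTermOrder

theorem MvPolynomial.coeff_sum_filter_monomial_coeff {R σ : Type*} [CommSemiring R]
    (p : MvPolynomial σ R) (P : (σ →₀ ℕ) → Prop) [DecidablePred P] (e : σ →₀ ℕ) :
    coeff e (∑ b ∈ p.support.filter P, monomial b (coeff b p)) = if P e then coeff e p else 0 := by
  rw [coeff_sum]
  simp only [coeff_monomial, Finset.sum_ite_eq', Finset.mem_filter, mem_support_iff]
  by_cases he : coeff e p = 0 <;> simp [he]

section LeadIdeal

variable {k σ : Type*} [Field k] {tle : (σ →₀ ℕ) → (σ →₀ ℕ) → Prop}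
  {I : Ideal (MvPolynomial σ k)}

theorem coeff_leadForm (f : MvPolynomial σ k) (e : σ →₀ ℕ) :
    coeff e (leadForm tle f) = if ∀ a ∈ f.support, tle a e then coeff e f else 0 :=
  coeff_sum_filter_monomial_coeff f _ e

theorem leadForm_eq_monomial (h : IsTermOrder tle) {f : MvPolynomial σ k} {b : σ →₀ ℕ}
    (hb : b ∈ f.support) (hmax : ∀ a ∈ f.support, tle a b) :
    leadForm tle f = monomial b (coeff b f) := by
  have := h.1
  ext e
  rw [coeff_leadForm, coeff_monomial]
  by_cases hbe : b = e
  · subst hbe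
    rw [if_pos hmax, if_pos rfl]
  · rw [if_neg hbe, ite_eq_right_iff]
    intro he
    by_contra hne
    exact hbe (antisymm (he b hb) (hmax e (mem_support_iff.2 hne)))

theorem monomial_mem_leadIdeal (h : IsTermOrder tle) {f : MvPolynomial σ k} (hf : f ∈ I)
    {b : σ →₀ ℕ} (hb : b ∈ f.support) (hmax : ∀ a ∈ f.support, tle a b) :
    monomial b (1 : k) ∈ leadIdeal tle I := by
  have hlead : leadForm tle f ∈ leadIdeal tle I :=
    Ideal.subset_span ⟨f, hf, by rintro rfl; simp at hb, rfl⟩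
  rw [leadForm_eq_monomial h hb hmax] at hlead
  simpa [C_mul_monomial, inv_mul_cancel₀ (mem_support_iff.1 hb)] using
    Ideal.mul_mem_left _ (C (coeff b f)⁻¹) hlead

theorem exists_of_mem_support_of_mem_leadIdeal {p : MvPolynomial σ k}
    (hp : p ∈ leadIdeal tle I) {e : σ →₀ ℕ} (he : e ∈ p.support) :
    ∃ u f b, f ∈ I ∧ b ∈ f.support ∧ (∀ a ∈ f.support, tle a b) ∧ e = u + b := by
  obtain ⟨c, hc, rfl⟩ := Submodule.mem_span_set.1 hp
  obtain ⟨g, hg, he⟩ := Finset.mem_biUnion.1 (support_sum he)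
  obtain ⟨u, hu, v, hv, rfl⟩ := Finset.mem_add.1 (support_mul _ _ he)
  obtain ⟨f, hf, -, rfl⟩ := hc hg
  rw [mem_support_iff, coeff_leadForm] at hv
  split_ifs at hv with hmax
  · exact ⟨u, f, v, hf, mem_support_iff.2 hv, hmax, rfl⟩
  · exact absurd rfl hv

theorem monomial_mem_leadIdeal_of_mem_support (h : IsTermOrder tle) {p : MvPolynomial σ k}
    (hp : p ∈ leadIdeal tle I) {e : σ →₀ ℕ} (he : e ∈ p.support) :
    monomial e (1 : k) ∈ leadIdeal tle I := by
  obtain ⟨u, f, b, hf, hb, hmax, rfl⟩ := exists_of_mem_support_of_mem_leadIdeal hp he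
  simpa [monomial_mul] using
    Ideal.mul_mem_left _ (monomial u 1) (monomial_mem_leadIdeal h hf hb hmax)

theorem exists_mem_coeff_eq_one_of_monomial_mem_leadIdeal (h : IsTermOrder tle)
    {e : σ →₀ ℕ} (he : monomial e (1 : k) ∈ leadIdeal tle I) :
    ∃ g ∈ I, coeff e g = 1 ∧ ∀ a ∈ g.support, tle a e := by
  obtain ⟨u, f, b, hf, hb, hmax, rfl⟩ :=
    exists_of_mem_support_of_mem_leadIdeal he (e := e) (by simp [mem_support_iff])
  have hcoeff : ∀ a, coeff a (C (coeff b f)⁻¹ * (monomial u 1 * f)) =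
      (coeff b f)⁻¹ * if u ≤ a then coeff (a - u) f else 0 := by
    simp [coeff_C_mul, coeff_monomial_mul']
  refine ⟨C (coeff b f)⁻¹ * (monomial u 1 * f),
    Ideal.mul_mem_left _ _ (Ideal.mul_mem_left _ _ hf), ?_, fun a ha => ?_⟩
  · simp [hcoeff, inv_mul_cancel₀ (mem_support_iff.1 hb)]
  · rw [mem_support_iff, hcoeff] at ha
    split_ifs at ha with hua
    · have hau := h.2.2 _ _ u (hmax (a - u) (mem_support_iff.2 (right_ne_zero_of_mul ha)))
      rwa [tsub_add_cancel_of_le hua, add_comm b] at hau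
    · simp at ha

theorem eq_zero_of_forall_monomial_notMem_leadIdeal (h : IsTermOrder tle)
    {f : MvPolynomial σ k} (hf : f ∈ I)
    (hstd : ∀ e ∈ f.support, monomial e (1 : k) ∉ leadIdeal tle I) : f = 0 := by
  by_contra hf0
  obtain ⟨b, hb, hmax⟩ := h.exists_max (support_nonempty.2 hf0)
  exact hstd b hb (monomial_mem_leadIdeal h hf hb hmax)

end LeadIdeal

section ReducedElement

variable {k σ : Type*} [Field k]

/-- `g = x^m - NF(x^m)` for a non-standard exponent `m`; for the minimal generators `x^m` of
`leadIdeal tle I` these form the reduced Gröbner basis of `I`. -/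
structure IsReducedElement (tle : (σ →₀ ℕ) → (σ →₀ ℕ) → Prop) (I : Ideal (MvPolynomial σ k))
    (m : σ →₀ ℕ) (g : MvPolynomial σ k) : Prop where
  mem : g ∈ I
  coeff_self : coeff m g = 1
  rel_of_mem_support : ∀ a ∈ g.support, tle a m
  notMem_leadIdeal : ∀ a ∈ g.support, a ≠ m → monomial a (1 : k) ∉ leadIdeal tle I

variable {tle : (σ →₀ ℕ) → (σ →₀ ℕ) → Prop} {I : Ideal (MvPolynomial σ k)}

namespace IsReducedElement

variable {m : σ →₀ ℕ} {g : MvPolynomial σ k}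

theorem mem_support (hg : IsReducedElement tle I m g) : m ∈ g.support := by
  simp [mem_support_iff, hg.coeff_self]

theorem ne_zero (hg : IsReducedElement tle I m g) : g ≠ 0 := by
  rintro rfl
  simpa using hg.mem_support

theorem coeff_of_mem_leadIdeal (hg : IsReducedElement tle I m g) {a : σ →₀ ℕ}
    (ha : monomial a (1 : k) ∈ leadIdeal tle I) : coeff a g = if a = m then 1 else 0 := by
  split_ifs with ham
  · exact ham ▸ hg.coeff_self
  · by_contra hne
    exact hg.notMem_leadIdeal a (mem_support_iff.2 hne) ham ha

end IsReducedElement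

theorem coeff_sum_C_mul_isReducedElement {G : (σ →₀ ℕ) → MvPolynomial σ k}
    {S : Finset (σ →₀ ℕ)} (hG : ∀ b ∈ S, IsReducedElement tle I b (G b)) (c : (σ →₀ ℕ) → k)
    {a : σ →₀ ℕ} (ha : monomial a (1 : k) ∈ leadIdeal tle I) :
    coeff a (∑ b ∈ S, C (c b) * G b) = if a ∈ S then c a else 0 := by
  rw [coeff_sum, ← Finset.sum_ite_eq' S a c]
  refine Finset.sum_congr rfl fun b hb => ?_
  rw [coeff_C_mul, (hG b hb).coeff_of_mem_leadIdeal ha]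
  simp [eq_comm]

/-- Subtract from an element of `I` with leading term `x^m` the reduced elements, available by
induction, at its smaller non-standard exponents. -/
theorem exists_isReducedElement [Finite σ] (h : IsTermOrder tle) (m : σ →₀ ℕ)
    (hm : monomial m (1 : k) ∈ leadIdeal tle I) : ∃ g, IsReducedElement tle I m g := by
  have := h.1
  induction m using h.wellFounded.induction with
  | _ m ih =>
    choose! G hG using ih
    obtain ⟨g, hgI, hgm, hgle⟩ := exists_mem_coeff_eq_one_of_monomial_mem_leadIdeal h hm
    set S := g.support.filter fun b => b ≠ m ∧ monomial b (1 : k) ∈ leadIdeal tle I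
    have hS : ∀ b ∈ S, IsReducedElement tle I b (G b) := fun b hb => by
      obtain ⟨hb, hbm, hbI⟩ := Finset.mem_filter.1 hb
      exact hG b ⟨hgle b hb, fun hmb => hbm (antisymm (hgle b hb) hmb)⟩ hbI
    have hcoeff : ∀ a, coeff a (g - ∑ b ∈ S, C (coeff b g) * G b) =
        coeff a g - ∑ b ∈ S, coeff b g * coeff a (G b) := by
      simp [coeff_sum, coeff_C_mul]
    refine ⟨g - ∑ b ∈ S, C (coeff b g) * G b,
      ⟨Ideal.sub_mem _ hgI (Ideal.sum_mem _ fun b hb => Ideal.mul_mem_left _ _ (hS b hb).mem),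
        ?_, fun a ha => ?_, fun a ha ham haI => ?_⟩⟩
    · rw [hcoeff, hgm, sub_eq_self]
      refine Finset.sum_eq_zero fun b hb => ?_
      have hbm := (Finset.mem_filter.1 hb).2.1
      rw [notMem_support_iff.1 fun hmb => hbm (antisymm ((hS b hb).rel_of_mem_support m hmb)
        (hgle b (Finset.mem_filter.1 hb).1)).symm, mul_zero]
    · rw [mem_support_iff, hcoeff] at ha
      by_cases hag : coeff a g = 0
      · obtain ⟨b, hb, hab⟩ := Finset.exists_ne_zero_of_sum_ne_zero (by simpa [hag] using ha)
        exact trans_of tle ((hS b hb).rel_of_mem_support a (mem_support_iff.2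
          (right_ne_zero_of_mul hab))) (hgle b (Finset.mem_filter.1 hb).1)
      · exact hgle a (mem_support_iff.2 hag)
    · rw [mem_support_iff, coeff_sub, coeff_sum_C_mul_isReducedElement hS _ haI] at ha
      by_cases hag : coeff a g = 0
      · simp [hag] at ha
      · simp [S, mem_support_iff.2 hag, ham, haI] at ha

/-- The remainder lies in `I` and is supported on standard monomials. -/
theorem eq_sum_C_mul_isReducedElement (h : IsTermOrder tle) {G : (σ →₀ ℕ) → MvPolynomial σ k}
    (hG : ∀ m, monomial m (1 : k) ∈ leadIdeal tle I → IsReducedElement tle I m (G m))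
    {f : MvPolynomial σ k} (hf : f ∈ I) :
    f = ∑ a ∈ f.support.filter (fun a => monomial a (1 : k) ∈ leadIdeal tle I),
      C (coeff a f) * G a := by
  set S := f.support.filter fun a => monomial a (1 : k) ∈ leadIdeal tle I
  have hS : ∀ b ∈ S, IsReducedElement tle I b (G b) :=
    fun b hb => hG b (Finset.mem_filter.1 hb).2
  rw [← sub_eq_zero]
  refine eq_zero_of_forall_monomial_notMem_leadIdeal h
    (Ideal.sub_mem _ hf (Ideal.sum_mem _ fun b hb => Ideal.mul_mem_left _ _ (hS b hb).mem))
    fun a ha haI => ?_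
  rw [mem_support_iff, coeff_sub, coeff_sum_C_mul_isReducedElement hS _ haI] at ha
  by_cases haf : coeff a f = 0
  · simp [haf] at ha
  · simp [S, mem_support_iff.2 haf, haI] at ha

end ReducedElement

section InitForm

variable {k : Type*} [Field k] {n : ℕ}

theorem wdot_eq_weight (w : Fin n → ℝ) (a : Fin n →₀ ℕ) : wdot w a = Finsupp.weight w a := by
  simp [wdot, Finsupp.weight_eq_sum, mul_comm]

theorem wdot_sum_smul {ι : Type*} (s : Finset ι) (c : ι → ℝ) (u : ι → Fin n → ℝ)
    (a : Fin n →₀ ℕ) : wdot (∑ i ∈ s, c i • u i) a = ∑ i ∈ s, c i * wdot (u i) a := by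
  simp only [wdot, Finset.sum_apply, Pi.smul_apply, smul_eq_mul, Finset.sum_mul, Finset.mul_sum,
    mul_assoc]
  exact Finset.sum_comm

theorem wdot_add (u v : Fin n → ℝ) (a : Fin n →₀ ℕ) : wdot (u + v) a = wdot u a + wdot v a := by
  simp [wdot, add_mul, Finset.sum_add_distrib]

theorem wdot_intCast (r : Fin n → ℤ) (a : Fin n →₀ ℕ) :
    wdot (fun j => (r j : ℝ)) a = rdotZ r a := by
  simp [wdot, rdotZ]

theorem continuous_wdot (a : Fin n →₀ ℕ) : Continuous fun w : Fin n → ℝ => wdot w a := by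
  unfold wdot
  fun_prop

theorem wdot_sum_smul_le {ι : Type*} (s : Finset ι) {c : ι → ℝ} (hc : ∀ i ∈ s, 0 ≤ c i)
    {u : ι → Fin n → ℝ} {a b : Fin n →₀ ℕ} (hab : ∀ i ∈ s, wdot (u i) a ≤ wdot (u i) b) :
    wdot (∑ i ∈ s, c i • u i) a ≤ wdot (∑ i ∈ s, c i • u i) b := by
  rw [wdot_sum_smul, wdot_sum_smul]
  exact Finset.sum_le_sum fun i hi => mul_le_mul_of_nonneg_left (hab i hi) (hc i hi)

theorem wdot_sum_smul_eq_iff {ι : Type*} (s : Finset ι) {c : ι → ℝ} (hc : ∀ i ∈ s, 0 ≤ c i)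
    {u : ι → Fin n → ℝ} {a b : Fin n →₀ ℕ} (hab : ∀ i ∈ s, wdot (u i) a ≤ wdot (u i) b) :
    wdot (∑ i ∈ s, c i • u i) a = wdot (∑ i ∈ s, c i • u i) b ↔
      ∀ i ∈ s, c i ≠ 0 → wdot (u i) a = wdot (u i) b := by
  rw [wdot_sum_smul, wdot_sum_smul,
    Finset.sum_eq_sum_iff_of_le fun i hi => mul_le_mul_of_nonneg_left (hab i hi) (hc i hi)]
  exact forall₂_congr fun i _ => by rw [mul_eq_mul_left_iff, or_iff_not_imp_right]

theorem coeff_initForm (w : Fin n → ℝ) (f : MvPolynomial (Fin n) k) (e : Fin n →₀ ℕ) :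
    coeff e (initForm w f) =
      if ∀ a ∈ f.support, wdot w a ≤ wdot w e then coeff e f else 0 :=
  coeff_sum_filter_monomial_coeff f _ e

theorem initForm_eq_weightedHomogeneousComponent {w : Fin n → ℝ} {f : MvPolynomial (Fin n) k}
    {m : Fin n →₀ ℕ} (hm : m ∈ f.support) (hmax : ∀ a ∈ f.support, wdot w a ≤ wdot w m) :
    initForm w f = weightedHomogeneousComponent w (wdot w m) f := by
  ext e
  rw [coeff_initForm, coeff_weightedHomogeneousComponent, ← wdot_eq_weight]
  by_cases he : e ∈ f.support
  · refine if_congr ⟨fun hle => le_antisymm (hmax e he) (hle m hm), fun heq a ha => ?_⟩ rfl rfl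
    exact heq ▸ hmax a ha
  · simp [notMem_support_iff.1 he]

theorem initForm_ne_zero {w : Fin n → ℝ} {f : MvPolynomial (Fin n) k} (hf : f ≠ 0) :
    initForm w f ≠ 0 := by
  obtain ⟨m, hm, hmax⟩ := f.support.exists_max_image (wdot w) (support_nonempty.2 hf)
  rw [initForm_eq_weightedHomogeneousComponent hm hmax]
  refine ne_zero_iff.2 ⟨m, ?_⟩
  simpa [coeff_weightedHomogeneousComponent, ← wdot_eq_weight] using hm

theorem mem_support_of_mem_support_initForm {w : Fin n → ℝ} {f : MvPolynomial (Fin n) k}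
    {e : Fin n →₀ ℕ} (he : e ∈ (initForm w f).support) :
    e ∈ f.support ∧ ∀ a ∈ f.support, wdot w a ≤ wdot w e := by
  rw [mem_support_iff, coeff_initForm] at he
  split_ifs at he with hmax
  · exact ⟨mem_support_iff.2 he, hmax⟩
  · exact absurd rfl he

end InitForm

section GroebnerFan

variable {k : Type*} [Field k] {n : ℕ} {tle : (Fin n →₀ ℕ) → (Fin n →₀ ℕ) → Prop}
  {I : Ideal (MvPolynomial (Fin n) k)} {G : (Fin n →₀ ℕ) → MvPolynomial (Fin n) k}

/-- Writing `f ∈ I` as a combination of reduced elements, the top-weight part of `f` only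
involves the initial forms of the reduced elements of top weight. -/
theorem initIdeal_le_of_forall_initForm_mem (h : IsTermOrder tle)
    (hG : ∀ m, monomial m (1 : k) ∈ leadIdeal tle I → IsReducedElement tle I m (G m))
    {w : Fin n → ℝ}
    (hw : ∀ m, monomial m (1 : k) ∈ leadIdeal tle I → ∀ a ∈ (G m).support, wdot w a ≤ wdot w m)
    {J : Ideal (MvPolynomial (Fin n) k)}
    (hJ : ∀ m, monomial m (1 : k) ∈ leadIdeal tle I → initForm w (G m) ∈ J) :
    initIdeal w I ≤ J := by
  refine Ideal.span_le.2 ?_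
  rintro _ ⟨f, hf, hf0, rfl⟩
  have hdecomp := eq_sum_C_mul_isReducedElement h hG hf
  set T := f.support.filter fun a => monomial a (1 : k) ∈ leadIdeal tle I
  have hT : T.Nonempty := by
    rw [Finset.nonempty_iff_ne_empty]
    rintro hT
    rw [hT, Finset.sum_empty] at hdecomp
    exact hf0 hdecomp
  obtain ⟨m, hmT, hmax⟩ := T.exists_max_image (wdot w) hT
  have hle : ∀ e ∈ f.support, wdot w e ≤ wdot w m := by
    intro e he
    rw [hdecomp] at he
    obtain ⟨a, ha, hea⟩ := Finset.mem_biUnion.1 (support_sum he)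
    rw [mem_support_iff, coeff_C_mul] at hea
    exact (hw a (Finset.mem_filter.1 ha).2 e (mem_support_iff.2 (right_ne_zero_of_mul hea))).trans
      (hmax a ha)
  rw [initForm_eq_weightedHomogeneousComponent (Finset.mem_filter.1 hmT).1 hle, hdecomp, map_sum]
  refine Ideal.sum_mem _ fun a ha => ?_
  have haI := (Finset.mem_filter.1 ha).2
  rw [weightedHomogeneousComponent_C_mul]
  refine Ideal.mul_mem_left _ _ ?_
  rcases (hmax a ha).lt_or_eq with hlt | heq
  · rw [weightedHomogeneousComponent_eq_zero' _ _ fun e he => ?_]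
    · exact J.zero_mem
    · rw [← wdot_eq_weight]
      exact ((hw a haI e he).trans_lt hlt).ne
  · rw [← heq, ← initForm_eq_weightedHomogeneousComponent (hG a haI).mem_support (hw a haI)]
    exact hJ a haI

namespace IsReducedElement

variable {m : Fin n →₀ ℕ} {g : MvPolynomial (Fin n) k}

/-- On the open cone `initForm v g` is a nonzero element of the monomial ideal `leadIdeal tle I`,
so its exponents are non-standard, hence equal to `m`; the inequalities persist on the closure. -/
theorem wdot_le_of_mem_gfCone (h : IsTermOrder tle) {w₀ : Fin n → ℝ}
    (hmono : initIdeal w₀ I = leadIdeal tle I) (hg : IsReducedElement tle I m g) {v : Fin n → ℝ}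
    (hv : v ∈ gfCone I w₀) : ∀ a ∈ g.support, wdot v a ≤ wdot v m := by
  have hclosed : IsClosed {v : Fin n → ℝ | ∀ a ∈ g.support, wdot v a ≤ wdot v m} := by
    simp only [Set.ofPred_forall]
    exact isClosed_iInter fun a => isClosed_iInter fun _ =>
      isClosed_le (continuous_wdot a) (continuous_wdot m)
  refine closure_minimal (fun v (hv : initIdeal v I = initIdeal w₀ I) => ?_) hclosed hv
  have hin : initForm v g ∈ leadIdeal tle I :=
    hmono ▸ hv ▸ Ideal.subset_span ⟨g, hg.mem, hg.ne_zero, rfl⟩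
  obtain ⟨e, he⟩ := support_nonempty.2 (initForm_ne_zero (w := v) hg.ne_zero)
  obtain ⟨heg, hmax⟩ := mem_support_of_mem_support_initForm he
  by_cases hem : e = m
  · exact hem ▸ hmax
  · exact absurd (monomial_mem_leadIdeal_of_mem_support h hin he) (hg.notMem_leadIdeal e heg hem)

/-- On the lineality space `g - initForm l g` lies in `I` and is supported on standard
monomials, so it vanishes. -/
theorem wdot_eq_of_initIdeal_eq_self (h : IsTermOrder tle) (hg : IsReducedElement tle I m g)
    {l : Fin n → ℝ} (hl : initIdeal l I = I) (hle : ∀ a ∈ g.support, wdot l a ≤ wdot l m) :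
    ∀ a ∈ g.support, wdot l a = wdot l m := by
  have hinit : initForm l g ∈ I := hl ▸ Ideal.subset_span ⟨g, hg.mem, hg.ne_zero, rfl⟩
  have hcoeff : ∀ e, coeff e (g - initForm l g) = if wdot l e = wdot l m then 0 else coeff e g := by
    intro e
    rw [coeff_sub, initForm_eq_weightedHomogeneousComponent hg.mem_support hle,
      coeff_weightedHomogeneousComponent, ← wdot_eq_weight]
    split_ifs <;> simp
  have hzero : g - initForm l g = 0 := by
    refine eq_zero_of_forall_monomial_notMem_leadIdeal h (Ideal.sub_mem _ hg.mem hinit)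
      fun e he => ?_
    rw [mem_support_iff, hcoeff] at he
    split_ifs at he with hem
    · exact absurd rfl he
    · exact hg.notMem_leadIdeal e (mem_support_iff.2 he) (by rintro rfl; exact hem rfl)
  intro a ha
  by_contra ham
  have := hcoeff a
  rw [hzero, coeff_zero, if_neg ham] at this
  exact mem_support_iff.1 ha this.symm

end IsReducedElement

theorem initForm_eq_initForm_of_wdot_eq_iff {w w' : Fin n → ℝ} {g : MvPolynomial (Fin n) k}
    {m : Fin n →₀ ℕ} (hm : m ∈ g.support) (hw : ∀ a ∈ g.support, wdot w a ≤ wdot w m)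
    (hw' : ∀ a ∈ g.support, wdot w' a ≤ wdot w' m)
    (hiff : ∀ a ∈ g.support, wdot w a = wdot w m ↔ wdot w' a = wdot w' m) :
    initForm w g = initForm w' g := by
  ext e
  rw [initForm_eq_weightedHomogeneousComponent hm hw,
    initForm_eq_weightedHomogeneousComponent hm hw',
    coeff_weightedHomogeneousComponent, coeff_weightedHomogeneousComponent, ← wdot_eq_weight,
    ← wdot_eq_weight]
  by_cases he : e ∈ g.support
  · exact if_congr (hiff e he) rfl rfl
  · simp [notMem_support_iff.1 he]

/-- On every reduced element both weights select the same top-weight part. -/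
theorem initIdeal_add_sum_smul_eq (h : IsTermOrder tle)
    (hG : ∀ m, monomial m (1 : k) ∈ leadIdeal tle I → IsReducedElement tle I m (G m))
    {l : Fin n → ℝ} (hl : initIdeal l I = I)
    (hlG : ∀ m, monomial m (1 : k) ∈ leadIdeal tle I → ∀ a ∈ (G m).support, wdot l a ≤ wdot l m)
    {ι : Type*} (s : Finset ι) (u : ι → Fin n → ℝ)
    (huG : ∀ i ∈ s, ∀ m, monomial m (1 : k) ∈ leadIdeal tle I →
      ∀ a ∈ (G m).support, wdot (u i) a ≤ wdot (u i) m)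
    {c : ι → ℝ} (hc : ∀ i ∈ s, 0 ≤ c i) :
    initIdeal (l + ∑ i ∈ s, c i • u i) I = initIdeal (∑ i ∈ s.filter (c · ≠ 0), u i) I := by
  set c' : ι → ℝ := fun i => if c i ≠ 0 then 1 else 0
  have hc' : ∀ i ∈ s, 0 ≤ c' i := fun i _ => by positivity
  have hwP : ∑ i ∈ s.filter (c · ≠ 0), u i = ∑ i ∈ s, c' i • u i := by
    simp [c', Finset.sum_filter, ite_smul]
  have hsum_le : ∀ {d : ι → ℝ}, (∀ i ∈ s, 0 ≤ d i) → ∀ m, monomial m (1 : k) ∈ leadIdeal tle I →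
      ∀ a ∈ (G m).support, wdot (∑ i ∈ s, d i • u i) a ≤ wdot (∑ i ∈ s, d i • u i) m :=
    fun hd m hm a ha => wdot_sum_smul_le s hd fun i hi => huG i hi m hm a ha
  have hflat := fun m hm => (hG m hm).wdot_eq_of_initIdeal_eq_self h hl (hlG m hm)
  have h₁ : ∀ m, monomial m (1 : k) ∈ leadIdeal tle I → ∀ a ∈ (G m).support,
      wdot (l + ∑ i ∈ s, c i • u i) a ≤ wdot (l + ∑ i ∈ s, c i • u i) m := fun m hm a ha => by
    rw [wdot_add, wdot_add, hflat m hm a ha]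
    exact add_le_add_right (hsum_le hc m hm a ha) _
  have hform : ∀ m, monomial m (1 : k) ∈ leadIdeal tle I →
      initForm (l + ∑ i ∈ s, c i • u i) (G m) = initForm (∑ i ∈ s, c' i • u i) (G m) :=
    fun m hm => initForm_eq_initForm_of_wdot_eq_iff (hG m hm).mem_support (h₁ m hm)
      (hsum_le hc' m hm) fun a ha => by
        rw [wdot_add, wdot_add, hflat m hm a ha, add_right_inj,
          wdot_sum_smul_eq_iff s hc fun i hi => huG i hi m hm a ha,
          wdot_sum_smul_eq_iff s hc' fun i hi => huG i hi m hm a ha]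
        simp [c']
  rw [hwP]
  refine le_antisymm (initIdeal_le_of_forall_initForm_mem h hG h₁ fun m hm => ?_)
    (initIdeal_le_of_forall_initForm_mem h hG (hsum_le hc') fun m hm => ?_)
  · rw [hform m hm]
    exact Ideal.subset_span ⟨G m, (hG m hm).mem, (hG m hm).ne_zero, rfl⟩
  · rw [← hform m hm]
    exact Ideal.subset_span ⟨G m, (hG m hm).mem, (hG m hm).ne_zero, rfl⟩

end GroebnerFan

theorem Finsupp.sumElim_inj {α β γ : Type*} [Zero γ] {f f' : α →₀ γ} {g g' : β →₀ γ} :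
    f.sumElim g = f'.sumElim g' ↔ f = f' ∧ g = g' := by
  simpa using (Finsupp.sumFinsuppEquivProdFinsupp (α := α) (β := β) (γ := γ)).symm.injective.eq_iff
    (a := (f, g)) (b := (f', g'))

section SumVariables

variable {R σ τ : Type*} [CommSemiring R]

def evalInr (v : τ → R) : MvPolynomial (σ ⊕ τ) R →ₐ[R] MvPolynomial σ R :=
  aeval (Sum.elim X (C ∘ v))

theorem evalInr_rename_inl (v : τ → R) (p : MvPolynomial σ R) :
    evalInr v (rename Sum.inl p) = p := by
  rw [evalInr, aeval_rename, Sum.elim_comp_inl, aeval_X_left_apply]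

theorem evalInr_rename_inr (v : τ → R) (r : MvPolynomial τ R) :
    evalInr (σ := σ) v (rename Sum.inr r) = C (eval v r) := by
  rw [evalInr, aeval_rename, Sum.elim_comp_inr, ← coe_aeval_eq_eval]
  exact (comp_aeval_apply v (Algebra.ofId R (MvPolynomial σ R)) r).symm

theorem evalInr_surjective (v : τ → R) : Function.Surjective (evalInr (σ := σ) v) :=
  fun p => ⟨rename Sum.inl p, evalInr_rename_inl v p⟩

theorem monomial_sumElim (a : σ →₀ ℕ) (u : τ →₀ ℕ) (c : R) :
    monomial (a.sumElim u) c =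
      rename Sum.inr (monomial u c) * monomial (a.mapDomain Sum.inl) 1 := by
  rw [rename_monomial, monomial_mul, mul_one, Finsupp.sumElim_eq_add, add_comm]

theorem evalInr_monomial_sumElim (v : τ → R) (a : σ →₀ ℕ) (u : τ →₀ ℕ) (c : R) :
    evalInr v (monomial (a.sumElim u) c) = monomial a (c * u.prod fun i e => v i ^ e) := by
  rw [monomial_sumElim, map_mul, evalInr_rename_inr, ← rename_monomial, evalInr_rename_inl,
    eval_monomial, C_mul_monomial, mul_one]

theorem coeff_evalInr_one [DecidableEq σ] (q : MvPolynomial (σ ⊕ τ) R) (a : σ →₀ ℕ) :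
    coeff a (evalInr 1 q) = ∑ e ∈ q.support.filter
      (fun e => e.comapDomain Sum.inl Sum.inl_injective.injOn = a), coeff e q := by
  conv_lhs => rw [q.as_sum]
  rw [map_sum, coeff_sum, Finset.sum_filter]
  refine Finset.sum_congr rfl fun e _ => ?_
  obtain ⟨b, u, rfl⟩ : ∃ b u, e = Finsupp.sumElim b u :=
    ⟨_, _, (Finsupp.comapDomain_sumElim_comapDomain e).symm⟩
  simp [evalInr_monomial_sumElim, coeff_monomial]

theorem exists_sumElim_mem_support_of_mem_support_evalInr_one [DecidableEq σ]
    {q : MvPolynomial (σ ⊕ τ) R} {a : σ →₀ ℕ} (ha : a ∈ (evalInr 1 q).support) :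
    ∃ u, a.sumElim u ∈ q.support := by
  rw [mem_support_iff, coeff_evalInr_one] at ha
  obtain ⟨e, he, -⟩ := Finset.exists_ne_zero_of_sum_ne_zero ha
  obtain ⟨hes, rfl⟩ := Finset.mem_filter.1 he
  exact ⟨_, (Finsupp.comapDomain_sumElim_comapDomain e).symm ▸ hes⟩

theorem coeff_sumElim_rename_inr_mul_monomial [DecidableEq σ] (r : MvPolynomial τ R)
    (a b : σ →₀ ℕ) (u : τ →₀ ℕ) :
    coeff (a.sumElim u) (rename Sum.inr r * monomial (b.mapDomain Sum.inl) 1) =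
      if b = a then coeff u r else 0 := by
  conv_lhs => rw [r.as_sum]
  simp only [map_sum, Finset.sum_mul, ← monomial_sumElim, coeff_sum, coeff_monomial,
    Finsupp.sumElim_inj]
  split_ifs with hba
  · simp only [hba, true_and, Finset.sum_ite_eq', mem_support_iff]
    split_ifs with hu
    · rfl
    · exact (not_not.1 hu).symm
  · simp [hba]

end SumVariables

theorem ker_evalInr {R σ τ : Type*} [CommRing R] (v : τ → R) :
    RingHom.ker (evalInr (σ := σ) v) = Ideal.span (Set.range fun i => X (Sum.inr i) - C (v i)) := by
  set K := Ideal.span (Set.range fun i => (X (Sum.inr i) : MvPolynomial (σ ⊕ τ) R) - C (v i))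
  have hK : ((Ideal.Quotient.mkₐ R K).comp (rename Sum.inl)).comp (evalInr v) =
      Ideal.Quotient.mkₐ R K := by
    refine algHom_ext fun x => ?_
    cases x with
    | inl j => simp [evalInr]
    | inr i =>
      simpa [evalInr, Ideal.Quotient.eq, eq_comm] using
        (Ideal.subset_span ⟨i, rfl⟩ : X (Sum.inr i) - C (v i) ∈ K)
  refine le_antisymm (fun p hp => ?_) (Ideal.span_le.2 ?_)
  · rw [← Ideal.Quotient.eq_zero_iff_mem, ← Ideal.Quotient.mkₐ_eq_mk R, ← hK]
    simp [RingHom.mem_ker.1 hp]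
  · rintro _ ⟨i, rfl⟩
    simp [evalInr]

def quotientSupKerAlgEquiv {R A B : Type*} [CommRing R] [CommRing A] [CommRing B] [Algebra R A]
    [Algebra R B] (f : A →ₐ[R] B) (hf : Function.Surjective f) (J : Ideal A) :
    (A ⧸ (J ⊔ RingHom.ker f)) ≃ₐ[R] B ⧸ J.map f :=
  (Ideal.quotientEquivAlgOfEq R (by
    ext x
    rw [RingHom.mem_ker, AlgHom.comp_apply, Ideal.Quotient.mkₐ_eq_mk,
      Ideal.Quotient.eq_zero_iff_mem, ← Ideal.mem_comap, Ideal.comap_map_of_surjective f hf,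
      RingHom.ker_eq_comap_bot])).trans
    (Ideal.quotientKerAlgEquivOfSurjective
      (f := (Ideal.Quotient.mkₐ R (J.map f)).comp f) ((Ideal.Quotient.mkₐ_surjective R _).comp hf))

section Lift

variable {k : Type*} [Field k] {n N : ℕ} (M : Fin N → Fin n → ℤ)

theorem rdotZ_le_muM {f : MvPolynomial (Fin n) k} {a : Fin n →₀ ℕ} (ha : a ∈ f.support)
    (i : Fin N) : rdotZ (M i) a ≤ muM M f i := by
  have hmem := Finset.mem_image_of_mem (fun a => rdotZ (M i) a) ha
  obtain ⟨μ, hμ⟩ := Finset.max_of_mem hmem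
  have hle := Finset.le_max hmem
  rw [hμ, WithBot.coe_le_coe] at hle
  rwa [muM, hμ, WithBot.unbotD_coe]

theorem muM_eq {f : MvPolynomial (Fin n) k} {m : Fin n →₀ ℕ} (hm : m ∈ f.support) (i : Fin N)
    (hmax : ∀ a ∈ f.support, rdotZ (M i) a ≤ rdotZ (M i) m) : muM M f i = rdotZ (M i) m := by
  refine le_antisymm ?_ (rdotZ_le_muM M hm i)
  obtain ⟨μ, hμ⟩ := Finset.max_of_mem (Finset.mem_image_of_mem (fun a => rdotZ (M i) a) hm)
  obtain ⟨a, ha, rfl⟩ := Finset.mem_image.1 (Finset.mem_of_max hμ)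
  rw [muM, hμ, WithBot.unbotD_coe]
  exact hmax a ha

/-- The exponent of `t` in the lift of the term `x^a` of `f`. -/
def liftShift (f : MvPolynomial (Fin n) k) (a : Fin n →₀ ℕ) : Fin N →₀ ℕ :=
  Finsupp.equivFunOnFinite.symm fun i => (muM M f i - rdotZ (M i) a).toNat

theorem liftExp_eq_sumElim (f : MvPolynomial (Fin n) k) (a : Fin n →₀ ℕ) :
    liftExp M f a = a.sumElim (liftShift M f a) := by
  ext (j | i) <;> simp [liftExp, liftShift]

theorem liftShift_eq_zero {f : MvPolynomial (Fin n) k} {m : Fin n →₀ ℕ} (hm : m ∈ f.support)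
    (hmax : ∀ i, ∀ a ∈ f.support, rdotZ (M i) a ≤ rdotZ (M i) m) : liftShift M f m = 0 := by
  ext i
  simp [liftShift, muM_eq M hm i (hmax i)]

theorem liftPoly_eq_sum_rename_mul (f : MvPolynomial (Fin n) k) :
    liftPoly M f = ∑ a ∈ f.support,
      rename Sum.inr (monomial (liftShift M f a) (coeff a f)) *
        monomial (a.mapDomain Sum.inl) 1 := by
  simp only [liftPoly, liftExp_eq_sumElim, monomial_sumElim]

/-- The `ℤ^N`-grading of `S[t]` making all lifts homogeneous: `deg x_j` is the `j`-th column
of `M` and `deg t_i` the `i`-th unit vector. -/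
def liftWeight : Fin n ⊕ Fin N → Fin N → ℤ :=
  Sum.elim (fun j i => M i j) (fun i => Pi.single i 1)

theorem weight_liftWeight_sumElim (a : Fin n →₀ ℕ) (u : Fin N →₀ ℕ) :
    Finsupp.weight (liftWeight M) (a.sumElim u) = fun i => rdotZ (M i) a + u i := by
  ext i
  simp [Finsupp.weight_eq_sum, Fintype.sum_sum_type, liftWeight, rdotZ, Pi.single_apply, mul_comm]

theorem isWeightedHomogeneous_liftPoly (f : MvPolynomial (Fin n) k) :
    IsWeightedHomogeneous (liftWeight M) (liftPoly M f) (muM M f) := by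
  refine IsWeightedHomogeneous.sum _ _ _ fun a ha => isWeightedHomogeneous_monomial _ _ _ ?_
  rw [liftExp_eq_sumElim, weight_liftWeight_sumElim]
  ext i
  simp [liftShift, Int.toNat_of_nonneg (sub_nonneg.2 (rdotZ_le_muM M ha i))]

attribute [local instance] MvPolynomial.weightedGradedAlgebra

theorem liftIdeal_isHomogeneous (I : Ideal (MvPolynomial (Fin n) k)) :
    (liftIdeal M I).IsHomogeneous (weightedHomogeneousSubmodule k (liftWeight M)) :=
  Ideal.homogeneous_span _ _ fun _ ⟨f, _, hg⟩ =>
    ⟨muM M f, hg ▸ isWeightedHomogeneous_liftPoly M f⟩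

theorem evalInr_liftPoly (v : Fin N → k) (f : MvPolynomial (Fin n) k) :
    evalInr v (liftPoly M f) =
      ∑ a ∈ f.support, monomial a (coeff a f * ∏ i, v i ^ (muM M f i - rdotZ (M i) a).toNat) := by
  refine (map_sum _ _ _).trans (Finset.sum_congr rfl fun a _ => ?_)
  rw [liftExp_eq_sumElim, evalInr_monomial_sumElim, liftShift,
    Finsupp.prod_fintype _ _ fun _ => pow_zero _]
  simp

theorem evalInr_one_liftPoly (f : MvPolynomial (Fin n) k) : evalInr 1 (liftPoly M f) = f := by
  simp [evalInr_liftPoly, ← f.as_sum]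

theorem evalInr_one_mem_of_mem_liftIdeal {I : Ideal (MvPolynomial (Fin n) k)}
    {q : MvPolynomial (Fin n ⊕ Fin N) k} (hq : q ∈ liftIdeal M I) : evalInr 1 q ∈ I := by
  have hle : (liftIdeal M I).map (evalInr 1) ≤ I := by
    rw [liftIdeal, Ideal.map_span, Ideal.span_le]
    rintro _ ⟨_, ⟨f, hf, rfl⟩, rfl⟩
    rwa [SetLike.mem_coe, evalInr_one_liftPoly]
  exact hle (Ideal.mem_map_of_mem _ hq)

/-- Setting `t = 1` loses no information on a homogeneous element, since the degree of a
monomial `x^a t^u` determines `u` from `a`. -/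
theorem coeff_evalInr_one_of_isWeightedHomogeneous {q : MvPolynomial (Fin n ⊕ Fin N) k}
    {a : Fin n →₀ ℕ} {u : Fin N →₀ ℕ}
    (hq : IsWeightedHomogeneous (liftWeight M) q (Finsupp.weight (liftWeight M) (a.sumElim u))) :
    coeff a (evalInr 1 q) = coeff (a.sumElim u) q := by
  rw [coeff_evalInr_one]
  refine Finset.sum_eq_single (a.sumElim u) (fun e he hne => ?_) fun hnot => ?_
  · obtain ⟨hes, rfl⟩ := Finset.mem_filter.1 he
    obtain ⟨b, u', rfl⟩ : ∃ b u', e = Finsupp.sumElim b u' :=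
      ⟨_, _, (Finsupp.comapDomain_sumElim_comapDomain e).symm⟩
    have hw := hq (mem_support_iff.1 hes)
    simp only [weight_liftWeight_sumElim, Finsupp.comapDomain_inl_sumElim, funext_iff,
      add_right_inj, Nat.cast_inj] at hw
    exact absurd (by rw [Finsupp.ext hw]; simp) hne
  · by_contra hne
    exact hnot (Finset.mem_filter.2 ⟨mem_support_iff.2 hne, by simp⟩)

end Lift

set_option synthInstance.maxHeartbeats 400000

section LiftedAlgebra

variable {k : Type*} [Field k] {n N : ℕ} (M : Fin N → Fin n → ℤ)
  (I : Ideal (MvPolynomial (Fin n) k))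

abbrev liftedAlgebra :
    Algebra (MvPolynomial (Fin N) k) (MvPolynomial (Fin n ⊕ Fin N) k ⧸ liftIdeal M I) :=
  ((aeval fun i => Ideal.Quotient.mk (liftIdeal M I) (X (Sum.inr i)) :
    MvPolynomial (Fin N) k →ₐ[k] _).toRingHom).toAlgebra

theorem liftedAlgebra_smul_mk (r : MvPolynomial (Fin N) k) (x : MvPolynomial (Fin n ⊕ Fin N) k) :
    letI := liftedAlgebra M I
    r • Ideal.Quotient.mk (liftIdeal M I) x =
      Ideal.Quotient.mk (liftIdeal M I) (rename Sum.inr r * x) := by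
  let := liftedAlgebra M I
  rw [Algebra.smul_def, map_mul, rename_eq_aeval, ← Ideal.Quotient.mkₐ_eq_mk k, comp_aeval_apply]
  rfl

attribute [local instance] MvPolynomial.weightedGradedAlgebra in
theorem linearIndependent_standardMonomials {tle : (Fin n →₀ ℕ) → (Fin n →₀ ℕ) → Prop}
    (h : IsTermOrder tle) :
    letI := liftedAlgebra M I
    LinearIndependent (MvPolynomial (Fin N) k)
      (fun a : {a : Fin n →₀ ℕ // monomial a (1 : k) ∉ leadIdeal tle I} =>
        Ideal.Quotient.mk (liftIdeal M I) (monomial (Finsupp.mapDomain Sum.inl a.1) (1 : k))) := by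
  let := liftedAlgebra M I
  rw [linearIndependent_iff]
  intro l hl
  set p := ∑ b ∈ l.support, rename Sum.inr (l b) * monomial (b.1.mapDomain Sum.inl) (1 : k)
  have hp : p ∈ liftIdeal M I := by
    rw [← Ideal.Quotient.eq_zero_iff_mem, ← hl, Finsupp.linearCombination_apply, Finsupp.sum,
      map_sum]
    exact Finset.sum_congr rfl fun b _ => (liftedAlgebra_smul_mk M I _ _).symm
  have hcoeff : ∀ a u, coeff (a.sumElim u) p =
      ∑ b ∈ l.support, if b.1 = a then coeff u (l b) else 0 := fun a u => by
    simp only [p, coeff_sum, coeff_sumElim_rename_inr_mul_monomial]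
  by_contra hl0
  obtain ⟨b₀, hb₀⟩ := Finsupp.support_nonempty_iff.2 hl0
  obtain ⟨u₀, hu₀⟩ := ne_zero_iff.1 (Finsupp.mem_support_iff.1 hb₀)
  set d := Finsupp.weight (liftWeight M) (b₀.1.sumElim u₀)
  set q := weightedHomogeneousComponent (liftWeight M) d p
  have hq : evalInr 1 q = 0 := by
    refine eq_zero_of_forall_monomial_notMem_leadIdeal h (evalInr_one_mem_of_mem_liftIdeal M
      (weightedHomogeneousComponent_mem_of_mem _ _ (liftIdeal_isHomogeneous M I) hp d))
      fun a ha => ?_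
    obtain ⟨u, hu⟩ := exists_sumElim_mem_support_of_mem_support_evalInr_one ha
    rw [mem_support_iff, coeff_weightedHomogeneousComponent, ite_ne_right_iff, hcoeff] at hu
    obtain ⟨b, -, hb⟩ := Finset.exists_ne_zero_of_sum_ne_zero hu.2
    exact (ite_ne_right_iff.1 hb).1 ▸ b.2
  have key := coeff_evalInr_one_of_isWeightedHomogeneous M
    (weightedHomogeneousComponent_isWeightedHomogeneous d p)
  rw [hq, coeff_zero, coeff_weightedHomogeneousComponent, if_pos rfl, hcoeff,
    Finset.sum_eq_single b₀ (fun b _ hb => if_neg fun h => hb (Subtype.ext h))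
      (fun h => absurd hb₀ h), if_pos rfl] at key
  exact hu₀ key.symm

theorem span_standardMonomials_eq_top {tle : (Fin n →₀ ℕ) → (Fin n →₀ ℕ) → Prop}
    {G : (Fin n →₀ ℕ) → MvPolynomial (Fin n) k}
    (hG : ∀ m, monomial m (1 : k) ∈ leadIdeal tle I → IsReducedElement tle I m (G m))
    (hMG : ∀ m, monomial m (1 : k) ∈ leadIdeal tle I →
      ∀ i, ∀ a ∈ (G m).support, rdotZ (M i) a ≤ rdotZ (M i) m) :
    letI := liftedAlgebra M I
    Submodule.span (MvPolynomial (Fin N) k)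
        {x : MvPolynomial (Fin n ⊕ Fin N) k ⧸ liftIdeal M I |
          ∃ a : Fin n →₀ ℕ, monomial a (1 : k) ∉ leadIdeal tle I ∧
            x = Ideal.Quotient.mk (liftIdeal M I)
              (monomial (Finsupp.mapDomain Sum.inl a) (1 : k))} = ⊤ := by
  let := liftedAlgebra M I
  set V := Submodule.span (MvPolynomial (Fin N) k)
    {x : MvPolynomial (Fin n ⊕ Fin N) k ⧸ liftIdeal M I |
      ∃ a : Fin n →₀ ℕ, monomial a (1 : k) ∉ leadIdeal tle I ∧
        x = Ideal.Quotient.mk (liftIdeal M I) (monomial (Finsupp.mapDomain Sum.inl a) (1 : k))}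
  have hx : ∀ a : Fin n →₀ ℕ,
      Ideal.Quotient.mk (liftIdeal M I) (monomial (a.mapDomain Sum.inl) (1 : k)) ∈ V := by
    intro a
    by_cases ha : monomial a (1 : k) ∈ leadIdeal tle I
    · have hzero : ∑ b ∈ (G a).support, monomial (liftShift M (G a) b) (coeff b (G a)) •
          Ideal.Quotient.mk (liftIdeal M I) (monomial (b.mapDomain Sum.inl) (1 : k)) = 0 := by
        simp only [liftedAlgebra_smul_mk, ← map_sum, ← liftPoly_eq_sum_rename_mul]
        exact Ideal.Quotient.eq_zero_iff_mem.2 (Ideal.subset_span ⟨G a, (hG a ha).mem, rfl⟩)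
      rw [← Finset.add_sum_erase _ _ (hG a ha).mem_support,
        liftShift_eq_zero M (hG a ha).mem_support (hMG a ha), (hG a ha).coeff_self,
        monomial_zero', C_1, one_smul] at hzero
      rw [eq_neg_of_add_eq_zero_left hzero]
      exact V.neg_mem (V.sum_mem fun b hb => V.smul_mem _ (Submodule.subset_span
        ⟨b, (hG a ha).notMem_leadIdeal b (Finset.mem_of_mem_erase hb) (Finset.ne_of_mem_erase hb),
          rfl⟩))
    · exact Submodule.subset_span ⟨a, ha, rfl⟩
  rw [eq_top_iff]
  rintro x -
  obtain ⟨p, rfl⟩ := Ideal.Quotient.mk_surjective x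
  induction p using MvPolynomial.induction_on' with
  | monomial e c =>
    obtain ⟨a, u, rfl⟩ : ∃ a u, e = Finsupp.sumElim a u :=
      ⟨_, _, (Finsupp.comapDomain_sumElim_comapDomain e).symm⟩
    rw [monomial_sumElim, ← liftedAlgebra_smul_mk]
    exact V.smul_mem _ (hx a)
  | add p q hp hq =>
    rw [map_add]
    exact V.add_mem hp hq

end LiftedAlgebra

section Fiber

variable {k : Type*} [Field k] {n N : ℕ} (M : Fin N → Fin n → ℤ)

theorem wdot_sum_rows (P : Finset (Fin N)) (a : Fin n →₀ ℕ) :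
    wdot (∑ i ∈ P, fun j => (M i j : ℝ)) a = ∑ i ∈ P, (rdotZ (M i) a : ℝ) := by
  simpa [wdot_intCast] using wdot_sum_smul P 1 (fun i j => (M i j : ℝ)) a

theorem evalInr_liftPoly_indicator (P : Finset (Fin N)) (f : MvPolynomial (Fin n) k) :
    evalInr (fun i => if i ∈ P then 0 else 1) (liftPoly M f) =
      ∑ a ∈ f.support.filter (fun a => ∀ i ∈ P, rdotZ (M i) a = muM M f i),
        monomial a (coeff a f) := by
  rw [evalInr_liftPoly, Finset.sum_filter]
  refine Finset.sum_congr rfl fun a ha => ?_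
  have hprod : ∀ i ∈ P, (muM M f i - rdotZ (M i) a).toNat = 0 ↔ rdotZ (M i) a = muM M f i :=
    fun i _ => by have := rdotZ_le_muM M ha i; omega
  simp only [ite_pow, one_pow, zero_pow_eq, Finset.prod_ite_mem, Finset.univ_inter,
    Finset.prod_ite_zero, Finset.prod_const_one]
  rw [if_congr (forall₂_congr hprod) rfl rfl]
  split_ifs <;> simp

theorem initForm_sum_rows {P : Finset (Fin N)} {f : MvPolynomial (Fin n) k} {a₀ : Fin n →₀ ℕ}
    (ha₀ : a₀ ∈ f.support) (hmax : ∀ i ∈ P, rdotZ (M i) a₀ = muM M f i) :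
    initForm (∑ i ∈ P, fun j => (M i j : ℝ)) f =
      ∑ a ∈ f.support.filter (fun a => ∀ i ∈ P, rdotZ (M i) a = muM M f i),
        monomial a (coeff a f) := by
  have hle : ∀ a ∈ f.support, ∀ i ∈ P, (rdotZ (M i) a : ℝ) ≤ muM M f i :=
    fun a ha i _ => Int.cast_le.2 (rdotZ_le_muM M ha i)
  have hiff : ∀ a ∈ f.support, ∑ i ∈ P, (rdotZ (M i) a : ℝ) = ∑ i ∈ P, (muM M f i : ℝ) ↔
      ∀ i ∈ P, rdotZ (M i) a = muM M f i := fun a ha => by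
    rw [Finset.sum_eq_sum_iff_of_le (hle a ha)]
    exact forall₂_congr fun i _ => Int.cast_inj
  have hsum₀ := (hiff a₀ ha₀).2 hmax
  refine Finset.sum_congr (Finset.filter_congr fun a ha => ?_) fun _ _ => rfl
  simp only [wdot_sum_rows, ← hiff a ha]
  refine ⟨fun h => le_antisymm (Finset.sum_le_sum (hle a ha)) (hsum₀ ▸ h a₀ ha₀),
    fun h a' ha' => h ▸ Finset.sum_le_sum (hle a' ha')⟩

theorem evalInr_liftPoly_mem_initIdeal (P : Finset (Fin N)) {I : Ideal (MvPolynomial (Fin n) k)}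
    {f : MvPolynomial (Fin n) k} (hf : f ∈ I) :
    evalInr (fun i => if i ∈ P then 0 else 1) (liftPoly M f) ∈
      initIdeal (∑ i ∈ P, fun j => (M i j : ℝ)) I := by
  rw [evalInr_liftPoly_indicator]
  by_cases h : ∃ a₀ ∈ f.support, ∀ i ∈ P, rdotZ (M i) a₀ = muM M f i
  · obtain ⟨a₀, ha₀, hmax⟩ := h
    rw [← initForm_sum_rows M ha₀ hmax]
    exact Ideal.subset_span ⟨f, hf, by rintro rfl; simp at ha₀, rfl⟩
  · rw [Finset.filter_false_of_mem fun a ha hmax => h ⟨a, ha, hmax⟩, Finset.sum_empty]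
    exact zero_mem _

theorem map_evalInr_liftIdeal {tle : (Fin n →₀ ℕ) → (Fin n →₀ ℕ) → Prop}
    {I : Ideal (MvPolynomial (Fin n) k)} {G : (Fin n →₀ ℕ) → MvPolynomial (Fin n) k}
    (h : IsTermOrder tle)
    (hG : ∀ m, monomial m (1 : k) ∈ leadIdeal tle I → IsReducedElement tle I m (G m))
    (hMG : ∀ m, monomial m (1 : k) ∈ leadIdeal tle I →
      ∀ i, ∀ a ∈ (G m).support, rdotZ (M i) a ≤ rdotZ (M i) m) (P : Finset (Fin N)) :
    (liftIdeal M I).map (evalInr fun i => if i ∈ P then 0 else 1) =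
      initIdeal (∑ i ∈ P, fun j => (M i j : ℝ)) I := by
  refine le_antisymm ?_ (initIdeal_le_of_forall_initForm_mem h hG (fun m hm a ha => ?_)
    fun m hm => ?_)
  · rw [liftIdeal, Ideal.map_span, Ideal.span_le]
    rintro _ ⟨_, ⟨f, hf, rfl⟩, rfl⟩
    exact evalInr_liftPoly_mem_initIdeal M P hf
  · rw [wdot_sum_rows, wdot_sum_rows]
    exact Finset.sum_le_sum fun i _ => Int.cast_le.2 (hMG m hm i a ha)
  · rw [initForm_sum_rows M (hG m hm).mem_support
      fun i _ => (muM_eq M (hG m hm).mem_support i (hMG m hm i)).symm,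
      ← evalInr_liftPoly_indicator]
    exact Ideal.mem_map_of_mem _ (Ideal.subset_span ⟨G m, (hG m hm).mem, rfl⟩)

end Fiber

theorem lifted_family_is_free_with_standard_monomial_basis_and_fibers_general
    {k : Type*} [Field k] {n N : ℕ}
    (I : Ideal (MvPolynomial (Fin n) k))
    -- a term order `<`:
    (tle : (Fin n →₀ ℕ) → (Fin n →₀ ℕ) → Prop) (hterm : IsTermOrder tle)
    -- `C = gfCone I w₀` is a maximal Gröbner cone compatible with `<`:
    (w₀ : Fin n → ℝ) (hmono : initIdeal w₀ I = leadIdeal tle I)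
    -- the rows of `M` lie in `C` and together with the lineality space generate `C`:
    (M : Fin N → Fin n → ℤ)
    (hrows : ∀ i, (fun j => (M i j : ℝ)) ∈ gfCone I w₀)
    (hCgen : gfCone I w₀ = {x : Fin n → ℝ | ∃ l : Fin n → ℝ, initIdeal l I = I ∧
      ∃ c : Fin N → ℝ, (∀ i, 0 ≤ c i) ∧ x = l + ∑ i, c i • (fun j => (M i j : ℝ))}) :
    -- (i) `Ã_M` is a free `k[t_1,…,t_N]`-module with basis the standard monomials:
    (letI : Algebra (MvPolynomial (Fin N) k)
        (MvPolynomial (Fin n ⊕ Fin N) k ⧸ liftIdeal M I) :=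
      ((MvPolynomial.aeval fun i =>
          Ideal.Quotient.mk (liftIdeal M I) (X (Sum.inr i)) :
        MvPolynomial (Fin N) k →ₐ[k] _).toRingHom).toAlgebra
     LinearIndependent (MvPolynomial (Fin N) k)
        (fun a : {a : Fin n →₀ ℕ // monomial a (1 : k) ∉ initIdeal w₀ I} =>
          Ideal.Quotient.mk (liftIdeal M I)
            (monomial (Finsupp.mapDomain Sum.inl a.1) (1 : k))) ∧
      Submodule.span (MvPolynomial (Fin N) k)
        {x : MvPolynomial (Fin n ⊕ Fin N) k ⧸ liftIdeal M I |
          ∃ a : Fin n →₀ ℕ, monomial a (1 : k) ∉ initIdeal w₀ I ∧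
            x = Ideal.Quotient.mk (liftIdeal M I)
              (monomial (Finsupp.mapDomain Sum.inl a) (1 : k))} = ⊤) ∧
    -- (ii) for every face `τ` of `C` (given by `w₁ ∈ C`) there is `a_τ ∈ k^N` such
    -- that the fiber of the family at `a_τ` is `S/init_τ(I)`;
    -- in particular generic fibers are `S/I` and all `S/init_τ(I)` occur:
    (∀ w₁ : Fin n → ℝ, w₁ ∈ gfCone I w₀ →
      ∃ aτ : Fin N → k, Nonempty
        ((MvPolynomial (Fin n ⊕ Fin N) k ⧸
            (liftIdeal M I ⊔ Ideal.span (Set.range fun i => X (Sum.inr i) - C (aτ i))))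
          ≃ₐ[k] (MvPolynomial (Fin n) k ⧸ initIdeal w₁ I))) := by
  choose! G hG using fun m => exists_isReducedElement (I := I) hterm m
  have hcone : ∀ v ∈ gfCone I w₀, ∀ m, monomial m (1 : k) ∈ leadIdeal tle I →
      ∀ a ∈ (G m).support, wdot v a ≤ wdot v m :=
    fun v hv m hm => (hG m hm).wdot_le_of_mem_gfCone hterm hmono hv
  have hMG : ∀ m, monomial m (1 : k) ∈ leadIdeal tle I →
      ∀ i, ∀ a ∈ (G m).support, rdotZ (M i) a ≤ rdotZ (M i) m := fun m hm i a ha => by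
    have := hcone _ (hrows i) m hm a ha
    rw [wdot_intCast, wdot_intCast] at this
    exact_mod_cast this
  refine ⟨?_, fun w₁ hw₁ => ?_⟩
  · rw [hmono]
    exact ⟨linearIndependent_standardMonomials M I hterm, span_standardMonomials_eq_top M I hG hMG⟩
  · obtain ⟨l, hl, c, hc, rfl⟩ := hCgen ▸ hw₁
    have hlC : l ∈ gfCone I w₀ := hCgen ▸ ⟨l, hl, 0, fun _ => le_rfl, by simp⟩
    refine ⟨fun i => if i ∈ Finset.univ.filter (c · ≠ 0) then 0 else 1, ⟨?_⟩⟩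
    rw [initIdeal_add_sum_smul_eq hterm hG hl (hcone l hlC) _ _
      (fun i _ => hcone _ (hrows i)) fun i _ => hc i, ← map_evalInr_liftIdeal M hterm hG hMG,
      ← ker_evalInr]
    exact quotientSupKerAlgEquiv _ (evalInr_surjective _) _

theorem lifted_family_is_free_with_standard_monomial_basis_and_fibers
    {k : Type*} [Field k] {n N : ℕ}
    (I : Ideal (MvPolynomial (Fin n) k))
    -- `I` is homogeneous:
    (hIhom : ∀ f ∈ I, ∀ j : ℕ, MvPolynomial.homogeneousComponent j f ∈ I)
    -- a term order `<`:
    (tle : (Fin n →₀ ℕ) → (Fin n →₀ ℕ) → Prop) (hterm : IsTermOrder tle)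
    -- `C = gfCone I w₀` is a maximal Gröbner cone compatible with `<`:
    (w₀ : Fin n → ℝ) (hmono : initIdeal w₀ I = leadIdeal tle I)
    -- the rows of `M` lie in `C` and together with the lineality space generate `C`:
    (M : Fin N → Fin n → ℤ)
    (hrows : ∀ i, (fun j => (M i j : ℝ)) ∈ gfCone I w₀)
    (hCgen : gfCone I w₀ = {x : Fin n → ℝ | ∃ l : Fin n → ℝ, initIdeal l I = I ∧
      ∃ c : Fin N → ℝ, (∀ i, 0 ≤ c i) ∧ x = l + ∑ i, c i • (fun j => (M i j : ℝ))}) :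
    -- (i) `Ã_M` is a free `k[t_1,…,t_N]`-module with basis the standard monomials:
    (letI : Algebra (MvPolynomial (Fin N) k)
        (MvPolynomial (Fin n ⊕ Fin N) k ⧸ liftIdeal M I) :=
      ((MvPolynomial.aeval fun i =>
          Ideal.Quotient.mk (liftIdeal M I) (X (Sum.inr i)) :
        MvPolynomial (Fin N) k →ₐ[k] _).toRingHom).toAlgebra
     LinearIndependent (MvPolynomial (Fin N) k)
        (fun a : {a : Fin n →₀ ℕ // monomial a (1 : k) ∉ initIdeal w₀ I} =>
          Ideal.Quotient.mk (liftIdeal M I)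
            (monomial (Finsupp.mapDomain Sum.inl a.1) (1 : k))) ∧
      Submodule.span (MvPolynomial (Fin N) k)
        {x : MvPolynomial (Fin n ⊕ Fin N) k ⧸ liftIdeal M I |
          ∃ a : Fin n →₀ ℕ, monomial a (1 : k) ∉ initIdeal w₀ I ∧
            x = Ideal.Quotient.mk (liftIdeal M I)
              (monomial (Finsupp.mapDomain Sum.inl a) (1 : k))} = ⊤) ∧
    -- (ii) for every face `τ` of `C` (given by `w₁ ∈ C`) there is `a_τ ∈ k^N` such
    -- that the fiber of the family at `a_τ` is `S/init_τ(I)`;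
    -- in particular generic fibers are `S/I` and all `S/init_τ(I)` occur:
    (∀ w₁ : Fin n → ℝ, w₁ ∈ gfCone I w₀ →
      ∃ aτ : Fin N → k, Nonempty
        ((MvPolynomial (Fin n ⊕ Fin N) k ⧸
            (liftIdeal M I ⊔ Ideal.span (Set.range fun i => X (Sum.inr i) - C (aτ i))))
          ≃ₐ[k] (MvPolynomial (Fin n) k ⧸ initIdeal w₁ I))) :=
  lifted_family_is_free_with_standard_monomial_basis_and_fibers_general I tle hterm w₀ hmono M hrows
    hCgen
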